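/- Let S be a semigroup satisfying the Strong Følner Condition and let F be a Følner net in P_f(S). Then for every A ⊆ S, the upper Banach density d*_F(A) is at most the Følner density d_{Fø}(A). -/

import Mathlib

open scoped Classical symmDiff

/-- The translate `F · s` of a finite piece `F` by an element of `S ∪ {1}`
(`none` meaning "no shift"). -/
def netShift {S : Type*} [Mul S] (F : Set S) : Option S → Set S
  | none => F
  | some t => (· * t) '' F

/-- Upper Banach density of `A ⊆ S` with respect to a net `F = ⟨F i⟩` of finite
nonempty subsets of `S`, indexed by a directed preorder `I`. -/
noncomputable def uBD {S : Type*} [Mul S] {I : Type*} [Preorder I]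
    (F : I → Set S) (A : Set S) : ℝ :=
  sSup {α : ℝ | ∀ i₀ : I, ∃ i, i₀ ≤ i ∧ ∃ s : Option S,
    α * ((F i).ncard : ℝ) ≤ ((A ∩ netShift (F i) s).ncard : ℝ)}

/-- The Følner density of `A ⊆ S`. -/
noncomputable def folnerDensity {S : Type*} [Mul S] (A : Set S) : ℝ :=
  sSup {α : ℝ | ∀ H : Finset S, ∀ ε : ℝ, 0 < ε → ∃ K : Set S, K.Finite ∧ K.Nonempty ∧
    (∀ s ∈ H, ((K ∆ ((s * ·) '' K)).ncard : ℝ) < ε * K.ncard) ∧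
    α * (K.ncard : ℝ) ≤ ((A ∩ K).ncard : ℝ)}

/-!
For `i` large every piece `F i` is almost invariant under left translation by a given finite `H`,
and so is each right translate `F i t`, with no larger error, because left and right translations
commute. If `α > 0` and `α |F i| ≤ |A ∩ F i t|`, then an error `ε α |F i|` is at most
`ε |F i t|`, so `F i t` witnesses `α` in the definition of the Følner density. The pieces `F i`
themselves witness the Strong Følner Condition, which makes the Følner density nonnegative.
-/

open Filter

theorem Set.image_symmDiff_subset {α β : Type*} (f : α → β) (s t : Set α) :
    (f '' s) ∆ (f '' t) ⊆ f '' (s ∆ t) := by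
  rintro _ (⟨⟨x, hx, rfl⟩, hn⟩ | ⟨⟨x, hx, rfl⟩, hn⟩)
  · exact ⟨x, Or.inl ⟨hx, fun h => hn ⟨x, h, rfl⟩⟩, rfl⟩
  · exact ⟨x, Or.inr ⟨hx, fun h => hn ⟨x, h, rfl⟩⟩, rfl⟩

section Density

variable {S : Type*}

def uBDSet [Mul S] {I : Type*} [Preorder I] (F : I → Set S) (A : Set S) : Set ℝ :=
  {α : ℝ | ∀ i₀ : I, ∃ i, i₀ ≤ i ∧ ∃ s : Option S,
    α * ((F i).ncard : ℝ) ≤ ((A ∩ netShift (F i) s).ncard : ℝ)}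

def folnerDensitySet [Mul S] (A : Set S) : Set ℝ :=
  {α : ℝ | ∀ H : Finset S, ∀ ε : ℝ, 0 < ε → ∃ K : Set S, K.Finite ∧ K.Nonempty ∧
    (∀ s ∈ H, ((K ∆ ((s * ·) '' K)).ncard : ℝ) < ε * K.ncard) ∧
    α * (K.ncard : ℝ) ≤ ((A ∩ K).ncard : ℝ)}

theorem uBD_eq_sSup [Mul S] {I : Type*} [Preorder I] (F : I → Set S) (A : Set S) :
    uBD F A = sSup (uBDSet F A) := rfl

theorem folnerDensity_eq_sSup [Mul S] (A : Set S) :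
    folnerDensity A = sSup (folnerDensitySet A) := rfl

theorem folnerDensitySet_bddAbove [Mul S] (A : Set S) : BddAbove (folnerDensitySet A) := by
  refine ⟨1, fun α hα => ?_⟩
  obtain ⟨K, hKfin, hKne, -, hα⟩ := hα ∅ 1 one_pos
  have hKpos : (0 : ℝ) < K.ncard := by exact_mod_cast hKne.ncard_pos hKfin
  have hAK : ((A ∩ K).ncard : ℝ) ≤ K.ncard := by
    exact_mod_cast Set.ncard_le_ncard Set.inter_subset_right hKfin
  exact (mul_le_iff_le_one_left hKpos).mp (hα.trans hAK)

theorem netShift_finite [Mul S] {F : Set S} (hF : F.Finite) (s : Option S) :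
    (netShift F s).Finite := by
  cases s with
  | none => exact hF
  | some t => exact hF.image _

theorem netShift_nonempty [Mul S] {F : Set S} (hF : F.Nonempty) (s : Option S) :
    (netShift F s).Nonempty := by
  cases s with
  | none => exact hF
  | some t => exact hF.image _

theorem ncard_netShift_le [Mul S] {F : Set S} (hF : F.Finite) (s : Option S) :
    (netShift F s).ncard ≤ F.ncard := by
  cases s with
  | none => exact le_rfl
  | some t => exact Set.ncard_image_le hF

theorem ncard_symmDiff_netShift_le [Semigroup S] {F : Set S} (hF : F.Finite) (u : S)
    (s : Option S) :
    (netShift F s ∆ ((u * ·) '' netShift F s)).ncard ≤ (((u * ·) '' F) ∆ F).ncard := by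
  rw [symmDiff_comm ((u * ·) '' F)]
  cases s with
  | none => exact le_rfl
  | some t =>
    have hcomm : (u * ·) '' ((· * t) '' F) = (· * t) '' ((u * ·) '' F) := by
      simp only [Set.image_image, mul_assoc]
    have hfin : (F ∆ ((u * ·) '' F)).Finite := hF.union (hF.image _) |>.subset symmDiff_le_sup
    calc (((· * t) '' F) ∆ ((u * ·) '' ((· * t) '' F))).ncard
        ≤ ((· * t) '' (F ∆ ((u * ·) '' F))).ncard := by
          rw [hcomm]
          exact Set.ncard_le_ncard (Set.image_symmDiff_subset _ _ _) (hfin.image _)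
      _ ≤ (F ∆ ((u * ·) '' F)).ncard := Set.ncard_image_le hfin

variable {I : Type*} [Preorder I] {F : I → Set S}

theorem eventually_ncard_symmDiff_lt [Mul S] (hpos : ∀ i, 0 < (F i).ncard)
    (hFolner : ∀ s : S, Tendsto
      (fun i => ((((s * ·) '' F i) ∆ F i).ncard : ℝ) / ((F i).ncard : ℝ)) atTop (nhds 0))
    (H : Finset S) {δ : ℝ} (hδ : 0 < δ) :
    ∀ᶠ i in atTop, ∀ u ∈ H, ((((u * ·) '' F i) ∆ F i).ncard : ℝ) < δ * (F i).ncard := by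
  rw [eventually_all_finset]
  intro u _
  filter_upwards [(hFolner u).eventually_lt_const hδ] with i hi
  exact (div_lt_iff₀ (by exact_mod_cast hpos i)).mp hi

variable [IsDirected I (· ≤ ·)] [Nonempty I]

theorem zero_mem_folnerDensitySet [Mul S] (hpos : ∀ i, 0 < (F i).ncard)
    (hFolner : ∀ s : S, Tendsto
      (fun i => ((((s * ·) '' F i) ∆ F i).ncard : ℝ) / ((F i).ncard : ℝ)) atTop (nhds 0))
    (A : Set S) : (0 : ℝ) ∈ folnerDensitySet A := by
  intro H ε hε
  obtain ⟨i, hi⟩ := (eventually_ncard_symmDiff_lt hpos hFolner H hε).exists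
  refine ⟨F i, Set.finite_of_ncard_pos (hpos i), Set.nonempty_of_ncard_ne_zero (hpos i).ne',
    fun u hu => ?_, by simp⟩
  rw [symmDiff_comm]
  exact hi u hu

theorem mem_folnerDensitySet_of_mem_uBDSet [Semigroup S] (hpos : ∀ i, 0 < (F i).ncard)
    (hFolner : ∀ s : S, Tendsto
      (fun i => ((((s * ·) '' F i) ∆ F i).ncard : ℝ) / ((F i).ncard : ℝ)) atTop (nhds 0))
    {A : Set S} {α : ℝ} (hα : α ∈ uBDSet F A) (hα0 : 0 < α) : α ∈ folnerDensitySet A := by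
  intro H ε hε
  obtain ⟨i₀, hi₀⟩ :=
    eventually_atTop.mp (eventually_ncard_symmDiff_lt hpos hFolner H (mul_pos hε hα0))
  obtain ⟨i, hi, s, hs⟩ := hα i₀
  have hFfin : (F i).Finite := Set.finite_of_ncard_pos (hpos i)
  have hKfin := netShift_finite hFfin s
  have hAK : ((A ∩ netShift (F i) s).ncard : ℝ) ≤ (netShift (F i) s).ncard := by
    exact_mod_cast Set.ncard_le_ncard Set.inter_subset_right hKfin
  have hKF : ((netShift (F i) s).ncard : ℝ) ≤ (F i).ncard := by
    exact_mod_cast ncard_netShift_le hFfin s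
  refine ⟨netShift (F i) s, hKfin,
    netShift_nonempty (Set.nonempty_of_ncard_ne_zero (hpos i).ne') s, fun u hu => ?_,
    (mul_le_mul_of_nonneg_left hKF hα0.le).trans hs⟩
  calc ((netShift (F i) s ∆ ((u * ·) '' netShift (F i) s)).ncard : ℝ)
      ≤ ((((u * ·) '' F i) ∆ F i).ncard : ℝ) := by
        exact_mod_cast ncard_symmDiff_netShift_le hFfin u s
    _ < ε * α * (F i).ncard := hi₀ i hi u hu
    _ ≤ ε * (netShift (F i) s).ncard := by
        rw [mul_assoc]
        exact mul_le_mul_of_nonneg_left (hs.trans hAK) hε.le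

end Density

theorem uBD_le_folnerDensity_general {S : Type*} [Semigroup S]
    {I : Type*} [Preorder I] [Nonempty I] (F : I → Set S)
    (hfin : ∀ i, (F i).Finite) (hne : ∀ i, (F i).Nonempty)
    (hdir : ∀ i j : I, ∃ k, i ≤ k ∧ j ≤ k)
    (hFolner : ∀ s : S, Filter.Tendsto
      (fun i => ((((s * ·) '' F i) ∆ F i).ncard : ℝ) / ((F i).ncard : ℝ))
      Filter.atTop (nhds 0))
    (A : Set S) :
    uBD F A ≤ folnerDensity A := by
  have : IsDirected I (· ≤ ·) := ⟨hdir⟩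
  have hpos : ∀ i, 0 < (F i).ncard := fun i => (hne i).ncard_pos (hfin i)
  have hbdd := folnerDensitySet_bddAbove A
  have hnonneg : 0 ≤ sSup (folnerDensitySet A) :=
    le_csSup hbdd (zero_mem_folnerDensitySet hpos hFolner A)
  rw [uBD_eq_sSup, folnerDensity_eq_sSup]
  refine Real.sSup_le (fun α hα => ?_) hnonneg
  rcases le_or_gt α 0 with hα0 | hα0
  · exact hα0.trans hnonneg
  · exact le_csSup hbdd (mem_folnerDensitySet_of_mem_uBDSet hpos hFolner hα hα0)

theorem uBD_le_folnerDensity {S : Type*} [Semigroup S]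
    {I : Type*} [Preorder I] [Nonempty I] (F : I → Set S)
    (hfin : ∀ i, (F i).Finite) (hne : ∀ i, (F i).Nonempty)
    (hdir : ∀ i j : I, ∃ k, i ≤ k ∧ j ≤ k)
    (hSFC : ∀ H : Finset S, ∀ ε : ℝ, 0 < ε → ∃ K : Set S, K.Finite ∧ K.Nonempty ∧
      ∀ s ∈ H, ((K ∆ ((s * ·) '' K)).ncard : ℝ) < ε * K.ncard)
    (hFolner : ∀ s : S, Filter.Tendsto
      (fun i => ((((s * ·) '' F i) ∆ F i).ncard : ℝ) / ((F i).ncard : ℝ))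
      Filter.atTop (nhds 0))
    (A : Set S) :
    uBD F A ≤ folnerDensity A :=
  uBD_le_folnerDensity_general F hfin hne hdir hFolner A
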